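/- arXiv:1003.5222 — 3 statements merged into one kernel-verified Lean document; each statement's English description precedes it below -/
import Mathlib

section
/- For every real q ≥ 2, the quantity (q^3+q^2+q+1) · [q^{-2}(1-q^{-3})(1-q^{-2})] / [1 - q^{-2} + q^{-2}(1-q^{-3})(1-q^{-2})] is strictly less than q + 1. -/
/-! Since `q^3+q^2+q+1 = (q+1)(q^2+1)`, the claim reduces to
`(q^2+1)·a < 1 - q^{-2} + a` for `a = q^{-2}(1-q^{-3})(1-q^{-2})`, i.e. to `q^2·a < 1 - q^{-2}`,
which is `(1-q^{-3})(1-q^{-2}) < 1-q^{-2}`; this holds for every `q > 1`. -/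

section

variable {s t : ℝ}

theorem one_sub_add_mul_one_sub_mul_one_sub_pos (hs : 0 < s) (hs1 : s < 1) (ht1 : t < 1) :
    0 < 1 - s + s * (1 - t) * (1 - s) := by
  have : 1 - s + s * (1 - t) * (1 - s) = (1 - s) * (1 + s * (1 - t)) := by ring
  rw [this]
  exact mul_pos (by linarith) (by nlinarith)

theorem add_one_mul_lt_one_sub_add {k : ℝ} (hk : k * s = 1) (hs1 : s < 1) (ht : 0 < t) :
    (k + 1) * (s * (1 - t) * (1 - s)) < 1 - s + s * (1 - t) * (1 - s) := by
  have hks : k * (s * (1 - t) * (1 - s)) = (1 - t) * (1 - s) := by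
    linear_combination (1 - t) * (1 - s) * hk
  nlinarith [mul_pos ht (sub_pos.2 hs1)]

end

/-- For every real `q ≥ 2`, the quantity
`(q^3+q^2+q+1)·[q^{-2}(1-q^{-3})(1-q^{-2})] / [1 - q^{-2} + q^{-2}(1-q^{-3})(1-q^{-2})]`
is strictly less than `q + 1`. -/
theorem stmt_5 (q : ℝ) (hq : 2 ≤ q) :
    (q ^ 3 + q ^ 2 + q + 1) *
        (q ^ (-2 : ℤ) * (1 - q ^ (-3 : ℤ)) * (1 - q ^ (-2 : ℤ))) /
        (1 - q ^ (-2 : ℤ) + q ^ (-2 : ℤ) * (1 - q ^ (-3 : ℤ)) * (1 - q ^ (-2 : ℤ))) <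
      q + 1 := by
  have hq1 : 1 < q := by linarith
  have hs : 0 < q ^ (-2 : ℤ) := zpow_pos (by linarith) _
  have hs1 : q ^ (-2 : ℤ) < 1 := zpow_lt_one_of_neg₀ hq1 (by norm_num)
  have ht : 0 < q ^ (-3 : ℤ) := zpow_pos (by linarith) _
  have ht1 : q ^ (-3 : ℤ) < 1 := zpow_lt_one_of_neg₀ hq1 (by norm_num)
  have hk : q ^ 2 * q ^ (-2 : ℤ) = 1 := by
    rw [zpow_neg, zpow_ofNat, mul_inv_cancel₀ (by positivity)]
  rw [div_lt_iff₀ (one_sub_add_mul_one_sub_mul_one_sub_pos hs hs1 ht1),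
    show q ^ 3 + q ^ 2 + q + 1 = (q + 1) * (q ^ 2 + 1) by ring, mul_assoc]
  exact mul_lt_mul_of_pos_left (add_one_mul_lt_one_sub_add hk hs1 ht) (by linarith)
end

section
/- For real q ≥ 2 and integer n ≥ 3, the limiting average ((q^{n+1}-1)/(q-1)) · q^{1-n}L(q,n,n-1)/(1 - q^{1-n} + q^{1-n}L(q,n,n-1)) is strictly less than q+1, where L(q,n,n-1) = ∏_{i=2}^{n}(1-q^{-i}). -/
/-!
Write `a = q^{1-n}` and `L = ∏_{i=2}^{n}(1 - q^{-i})`. Since `q^{n+1} a = q^2`, clearing the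
(positive) denominators turns the inequality into `(1 - a) q^2 L < (1 - a)(q^2 - 1)`, that is
`L < 1 - q^{-2}`. This holds because `L` is the factor `1 - q^{-2}` times a nonempty product
of factors in `(0, 1)`.
-/

open Finset

section OneSubZpowNeg

variable {q : ℝ}

lemma one_sub_zpow_neg_pos (hq : 1 < q) {i : ℕ} (hi : 0 < i) : 0 < 1 - q ^ (-(i : ℤ)) :=
  sub_pos.2 (zpow_lt_one_of_neg₀ hq (by omega))

lemma one_sub_zpow_neg_lt_one (hq : 1 < q) (i : ℕ) : 1 - q ^ (-(i : ℤ)) < 1 :=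
  sub_lt_self 1 (zpow_pos (by linarith) _)

lemma prod_one_sub_zpow_neg_pos (hq : 1 < q) {s : Finset ℕ} (hs : ∀ i ∈ s, 0 < i) :
    0 < ∏ i ∈ s, (1 - q ^ (-(i : ℤ))) :=
  prod_pos fun i hi ↦ one_sub_zpow_neg_pos hq (hs i hi)

lemma prod_one_sub_zpow_neg_lt_one (hq : 1 < q) {s : Finset ℕ} (hs : ∀ i ∈ s, 0 < i)
    (hne : s.Nonempty) : ∏ i ∈ s, (1 - q ^ (-(i : ℤ))) < 1 := by
  calc ∏ i ∈ s, (1 - q ^ (-(i : ℤ))) < ∏ _i ∈ s, (1 : ℝ) :=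
        prod_lt_prod_of_nonempty (fun i hi ↦ one_sub_zpow_neg_pos hq (hs i hi))
          (fun i _ ↦ one_sub_zpow_neg_lt_one hq i) hne
    _ = 1 := prod_const_one

lemma prod_Icc_two_one_sub_zpow_neg_lt (hq : 1 < q) {n : ℕ} (hn : 3 ≤ n) :
    ∏ i ∈ Icc 2 n, (1 - q ^ (-(i : ℤ))) < 1 - q ^ (-2 : ℤ) := by
  rw [← insert_Icc_add_one_left_eq_Icc (by omega : 2 ≤ n), prod_insert (by simp)]
  refine mul_lt_of_lt_one_right (one_sub_zpow_neg_pos hq two_pos) ?_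
  exact prod_one_sub_zpow_neg_lt_one hq (fun i hi ↦ by simp at hi; omega) ⟨3, by simp; omega⟩

lemma sq_mul_prod_Icc_two_one_sub_zpow_neg_lt (hq : 1 < q) {n : ℕ} (hn : 3 ≤ n) :
    q ^ 2 * ∏ i ∈ Icc 2 n, (1 - q ^ (-(i : ℤ))) < q ^ 2 - 1 := by
  have hq2 : q ^ 2 * (1 - q ^ (-2 : ℤ)) = q ^ 2 - 1 := by
    rw [mul_one_sub, zpow_neg, zpow_ofNat, mul_inv_cancel₀ (by positivity)]
  rw [← hq2]
  exact mul_lt_mul_of_pos_left (prod_Icc_two_one_sub_zpow_neg_lt hq hn) (by positivity)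

end OneSubZpowNeg

lemma geom_mul_div_one_sub_add_lt {q Q a L : ℝ} (hq : 1 < q) (hQ : Q * a = q ^ 2)
    (ha₀ : 0 < a) (ha₁ : a < 1) (hL : 0 < L) (hqL : q ^ 2 * L < q ^ 2 - 1) :
    ((Q - 1) / (q - 1)) * (a * L / (1 - a + a * L)) < q + 1 := by
  have hden : 0 < (q - 1) * (1 - a + a * L) := mul_pos (by linarith) (by nlinarith)
  rw [div_mul_div_comm, div_lt_iff₀ hden]
  nlinarith [mul_pos (sub_pos.2 ha₁) (sub_pos.2 hqL)]

/-- For real `q ≥ 2` and integer `n ≥ 3`, the limiting average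
`((q^{n+1}-1)/(q-1)) · q^{1-n}L(q,n,n-1)/(1 - q^{1-n} + q^{1-n}L(q,n,n-1))` is strictly
less than `q+1`, where `L(q,n,n-1) = ∏_{i=2}^{n}(1-q^{-i})`. -/
theorem stmt_9 (q : ℝ) (hq : 2 ≤ q) (n : ℕ) (hn : 3 ≤ n) :
    ((q ^ (n + 1) - 1) / (q - 1)) *
      (q ^ (1 - (n : ℤ)) * (∏ i ∈ Finset.Icc 2 n, (1 - q ^ (-(i : ℤ)))) /
        (1 - q ^ (1 - (n : ℤ)) +
          q ^ (1 - (n : ℤ)) * ∏ i ∈ Finset.Icc 2 n, (1 - q ^ (-(i : ℤ))))) <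
    q + 1 := by
  have hq₁ : 1 < q := by linarith
  have hexp : q ^ (n + 1) * q ^ (1 - (n : ℤ)) = q ^ 2 := by
    rw [← zpow_natCast, ← zpow_add₀ (by positivity)]
    exact_mod_cast congrArg (q ^ ·) (by push_cast; ring : ((n + 1 : ℕ) : ℤ) + (1 - n) = 2)
  exact geom_mul_div_one_sub_add_lt hq₁ hexp (zpow_pos (by positivity) _)
    (zpow_lt_one_of_neg₀ hq₁ (by omega))
    (prod_one_sub_zpow_neg_pos hq₁ fun i hi ↦ by simp at hi; omega)
    (sq_mul_prod_Icc_two_one_sub_zpow_neg_lt hq₁ hn)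
end

section
/- For real q > 1, as n → ∞ the quantity ((q^{n+1}-1)/(q-1)) · q^{1-n}L(q,n,n-1)/(1 - q^{1-n} + q^{1-n}L(q,n,n-1)), with L(q,n,n-1) = ∏_{i=2}^{n}(1-q^{-i}), converges to (q+1)·∏_{n=3}^{∞}(1 - q^{-n}). -/
/-!
Write `ε n = q ^ (1 - n)` and `P n = ∏_{i=2}^{n} (1 - q⁻ⁱ)`. Since `q ^ (n + 1) * ε n = q ^ 2`,
the quantity equals `(q ^ 2 - ε n) / (q - 1) * P n / (1 - ε n + ε n * P n)`. As `ε n → 0` and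
`P n → ∏_{i ≥ 2} (1 - q⁻ⁱ)`, it tends to `q ^ 2 / (q - 1) * ∏_{i ≥ 2} (1 - q⁻ⁱ)`, and splitting off
the factor `1 - q⁻²` turns this into `(q + 1) * ∏_{i ≥ 3} (1 - q⁻ⁱ)`.
-/

open Filter Topology Finset

theorem abs_inv_lt_one_of_one_lt {q : ℝ} (hq : 1 < q) : |q⁻¹| < 1 := by
  rw [abs_of_pos (by positivity)]
  exact inv_lt_one_of_one_lt₀ hq

theorem Real.multipliable_one_sub_pow_add {r : ℝ} (hr : |r| < 1) (k : ℕ) :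
    Multipliable (fun i : ℕ => 1 - r ^ (i + k)) := by
  refine (Real.multipliable_one_add_of_summable
    ((summable_geometric_of_abs_lt_one hr).mul_right (r ^ k)).neg).congr fun i => ?_
  rw [pow_add, sub_eq_add_neg]

theorem Real.tprod_one_sub_pow_add_eq_mul {r : ℝ} (hr : |r| < 1) (k : ℕ) :
    ∏' i : ℕ, (1 - r ^ (i + k)) = (1 - r ^ k) * ∏' i : ℕ, (1 - r ^ (i + (k + 1))) := by
  have h := Real.multipliable_one_sub_pow_add hr (k + 1)
  simp_rw [← add_assoc, add_right_comm _ k 1] at h ⊢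
  rw [tprod_eq_zero_mul' (f := fun i => 1 - r ^ (i + k)) h, zero_add]

theorem HasProd.tendsto_prod_Icc {M : Type*} [CommMonoid M] [TopologicalSpace M] {f : ℕ → M}
    {k : ℕ} {a : M} (h : HasProd (fun i => f (i + k)) a) :
    Tendsto (fun n => ∏ i ∈ Icc k n, f i) atTop (𝓝 a) := by
  have hIcc (n : ℕ) : ∏ i ∈ Icc k n, f i = ∏ i ∈ range (n + 1 - k), f (i + k) := by
    rw [← Ico_add_one_right_eq_Icc, prod_Ico_eq_prod_range]
    simp only [add_comm k]
  simp only [hIcc]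
  exact h.tendsto_prod_nat.comp ((tendsto_sub_atTop_nat k).comp (tendsto_add_atTop_nat 1))

theorem zpow_one_sub_natCast_eq_mul_inv_pow {K : Type*} [DivisionRing K] {q : K} (hq : q ≠ 0)
    (n : ℕ) : q ^ (1 - (n : ℤ)) = q * q⁻¹ ^ n := by
  rw [zpow_sub₀ hq, zpow_one, zpow_natCast, inv_pow, div_eq_mul_inv]

theorem pow_succ_mul_zpow_one_sub {K : Type*} [DivisionRing K] {q : K} (hq : q ≠ 0) (n : ℕ) :
    q ^ (n + 1) * q ^ (1 - (n : ℤ)) = q ^ 2 := by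
  rw [← zpow_natCast, ← zpow_add₀ hq, ← zpow_natCast]
  congr 1
  push_cast
  ring

theorem Real.sq_div_sub_one_mul_tprod_one_sub_inv_pow {q : ℝ} (hq : 1 < q) :
    q ^ 2 / (q - 1) * ∏' i : ℕ, (1 - q⁻¹ ^ (i + 2)) =
      (q + 1) * ∏' i : ℕ, (1 - q ^ (-((i : ℤ) + 3))) := by
  have hr := abs_inv_lt_one_of_one_lt hq
  have hshift : ∏' i : ℕ, (1 - q ^ (-((i : ℤ) + 3))) = ∏' i : ℕ, (1 - q⁻¹ ^ (i + (2 + 1))) := by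
    congr! 3 with i
    rw [zpow_neg, inv_pow, ← zpow_natCast]
    push_cast
    rfl
  have hq1 : q - 1 ≠ 0 := sub_ne_zero.mpr hq.ne'
  rw [hshift, Real.tprod_one_sub_pow_add_eq_mul hr 2]
  field_simp
  ring

/-- For real `q > 1`, as `n → ∞` the quantity
`((q^{n+1}-1)/(q-1)) · q^{1-n}L(q,n,n-1)/(1 - q^{1-n} + q^{1-n}L(q,n,n-1))`, with
`L(q,n,n-1) = ∏_{i=2}^{n}(1-q^{-i})`, converges to `(q+1)·∏_{n=3}^{∞}(1 - q^{-n})`. -/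
theorem stmt_10 (q : ℝ) (hq : 1 < q) :
    Tendsto (fun n : ℕ =>
      ((q ^ (n + 1) - 1) / (q - 1)) *
        (q ^ (1 - (n : ℤ)) * (∏ i ∈ Finset.Icc 2 n, (1 - q ^ (-(i : ℤ)))) /
          (1 - q ^ (1 - (n : ℤ)) +
            q ^ (1 - (n : ℤ)) * ∏ i ∈ Finset.Icc 2 n, (1 - q ^ (-(i : ℤ))))))
      atTop
      (nhds ((q + 1) * ∏' i : ℕ, (1 - q ^ (-((i : ℤ) + 3))))) := by
  have hq0 : q ≠ 0 := by positivity
  have hr := abs_inv_lt_one_of_one_lt hq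
  have hε : Tendsto (fun n : ℕ => q ^ (1 - (n : ℤ))) atTop (𝓝 0) := by
    simpa [zpow_one_sub_natCast_eq_mul_inv_pow hq0]
      using (tendsto_pow_atTop_nhds_zero_of_abs_lt_one hr).const_mul q
  have hP : Tendsto (fun n : ℕ => ∏ i ∈ Icc 2 n, (1 - q ^ (-(i : ℤ)))) atTop
      (𝓝 (∏' i : ℕ, (1 - q⁻¹ ^ (i + 2)))) := by
    simpa using (Real.multipliable_one_sub_pow_add hr 2).hasProd.tendsto_prod_Icc
      (f := fun i => 1 - q⁻¹ ^ i)
  have hlim := ((((tendsto_const_nhds (x := q ^ 2)).sub hε).div_const (q - 1)).mul hP).div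
    ((tendsto_const_nhds (x := (1 : ℝ)).sub hε).add (hε.mul hP)) (by simp)
  rw [sub_zero, sub_zero, zero_mul, add_zero, div_one,
    Real.sq_div_sub_one_mul_tprod_one_sub_inv_pow hq] at hlim
  refine hlim.congr fun n => ?_
  rw [Pi.div_apply]
  have key := pow_succ_mul_zpow_one_sub hq0 n
  generalize q ^ (1 - (n : ℤ)) = ε at key ⊢
  generalize ∏ i ∈ Icc 2 n, (1 - q ^ (-(i : ℤ))) = P
  rw [← key]
  ring
end
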